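/- arXiv:2502.20863 — 2 statements merged into one kernel-verified Lean document; each statement's English description precedes it below -/
import Mathlib

section
/- Let n, m, d be positive integers satisfying m ≥ 10^9, m ≤ d ≤ n and n ≥ 2^m. Then for the binomial random graph G ~ G(n, d/n), one has Pr[G ∉ 𝒢_m] ≤ e^{−dn/10}. -/
open Finset MeasureTheory
open scoped NNReal ENNReal

attribute [local instance] Classical.propDecidable

noncomputable section

/-- `sBound m = ⌊2^(10⁻⁸·m)⌋`. -/
def sBound (m : ℕ) : ℕ := ⌊(2 : ℝ) ^ ((m : ℝ) / 10 ^ 8)⌋₊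

/-- Membership in the family `𝒢_m`, for a graph with vertex set `Vs` and adjacency
relation `Adj`. -/
def MemGm (m : ℕ) {V : Type*} (Vs : Finset V) (Adj : V → V → Prop) : Prop :=
  ∀ P : V → Fin (sBound m),
    (∀ i, ((Vs.filter fun v => P v = i).card : ℝ) ≤ (Vs.card : ℝ) / m) →
    0.55 * ((Vs.card : ℝ) * ((Vs.card : ℝ) - 1) / 2) <
      ∑ i : Fin (sBound m), ∑ j : Fin (sBound m),
        if i < j ∧ ∃ u ∈ Vs, ∃ v ∈ Vs, P u = i ∧ P v = j ∧ Adj u v then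
          ((Vs.filter fun v => P v = i).card : ℝ) * ((Vs.filter fun v => P v = j).card : ℝ)
        else 0

/-- The graph on `[n]` determined by a choice `f` of which pairs are edges. -/
def graphOf (n : ℕ) (f : Sym2 (Fin n) → Bool) : SimpleGraph (Fin n) where
  Adj u v := u ≠ v ∧ f s(u, v)
  symm := by
    constructor
    intro u v h
    exact ⟨h.1.symm, by rw [Sym2.eq_swap]; exact h.2⟩
  loopless := by constructor; intro u h; exact h.1 rfl

/-!
If `G ∉ 𝒢_m`, some partition `P` of `[n]` into `s` parts of size at most `n/m` has edges only
between pairs of parts of total weight at most `0.55·(n choose 2)`. As the parts are small, all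
pairs of parts together weigh at least `(1 - 1/m)·n²/2`, so the set `T` of pairs of parts with no
edge between them spans at least `n²/5` pairs of vertices, all of them non-edges of `G`. For a
fixed `(P, T)` this has probability at most `(1 - d/n)^(n²/5) ≤ e^{-dn/5}`, while there are at
most `s^n·2^(s²) ≤ e^{dn/10}` choices of `(P, T)`; a union bound finishes.
-/

set_option linter.deprecated false

theorem measure_pi_bernoulli_forall_false_le {ι : Type*} [Fintype ι] (q : ℝ≥0) (hq : q ≤ 1)
    (S : Finset ι) :
    Measure.pi (fun _ : ι => (PMF.bernoulli q hq).toMeasure) {f | ∀ e ∈ S, f e = false}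
      ≤ ENNReal.ofReal (Real.exp (-(q * #S))) := by
  have hset : {f : ι → Bool | ∀ e ∈ S, f e = false} = (S : Set ι).pi fun _ => {false} := by
    ext f; simp
  have hfalse : (PMF.bernoulli q hq).toMeasure {false} = ((1 - q : ℝ≥0) : ℝ≥0∞) := by
    simp [PMF.bernoulli_apply]
  rw [hset, Measure.pi_pi_finset, Finset.prod_const, hfalse, ← ENNReal.coe_pow,
    ← ENNReal.ofReal_coe_nnreal]
  refine ENNReal.ofReal_le_ofReal ?_
  rw [NNReal.coe_pow, NNReal.coe_sub hq, NNReal.coe_one, show -(q * #S : ℝ) = #S * -q by ring,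
    Real.exp_nat_mul]
  exact pow_le_pow_left₀ (by simpa using hq) (Real.one_sub_le_exp_neg _) _

theorem two_mul_sum_ite_lt_mul {ι R : Type*} [Fintype ι] [LinearOrder ι] [CommRing R]
    (f : ι → R) :
    2 * ∑ i, ∑ j, (if i < j then f i * f j else 0) = (∑ i, f i) ^ 2 - ∑ i, f i ^ 2 := by
  have hsplit : ∀ i j, f i * f j = (if i < j then f i * f j else 0)
      + (if j < i then f j * f i else 0) + (if i = j then f i * f j else 0) := by
    intro i j
    rcases lt_trichotomy i j with h | rfl | h
    · simp [h, h.not_gt, h.ne]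
    · simp
    · simp [h, h.not_gt, h.ne', mul_comm]
  have hdiag : ∑ i, ∑ j, (if i = j then f i * f j else 0) = ∑ i, f i ^ 2 := by
    simp [sq]
  rw [sq, sum_mul_sum, Fintype.sum_congr _ _ fun i => Fintype.sum_congr _ _ (hsplit i)]
  simp only [sum_add_distrib, hdiag]
  rw [sum_comm (f := fun i j => if j < i then f j * f i else 0)]
  ring

section Partition

variable {V ι : Type*} [Fintype V]

def partSize [DecidableEq ι] (P : V → ι) (i : ι) : ℕ :=
  #{v | P v = i}

def crossPairs (P : V → ι) (T : Finset (ι × ι)) : Finset (V × V) :=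
  {uv | (P uv.1, P uv.2) ∈ T}

theorem card_crossPairs [DecidableEq ι] (P : V → ι) (T : Finset (ι × ι)) :
    #(crossPairs P T) = ∑ q ∈ T, partSize P q.1 * partSize P q.2 := by
  rw [card_eq_sum_card_fiberwise (f := fun uv => (P uv.1, P uv.2)) (t := T)
    fun uv huv => by simpa [crossPairs] using huv]
  refine sum_congr rfl fun q hq => ?_
  rw [partSize, partSize, ← card_product]
  congr 1
  ext ⟨u, v⟩
  simp only [crossPairs, mem_filter, mem_univ, true_and, mem_product, Prod.ext_iff]
  constructor
  · exact fun h => h.2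
  · rintro ⟨hu, hv⟩
    rw [hu, hv]
    exact ⟨hq, rfl, rfl⟩

theorem injOn_sym2Mk_crossPairs [LinearOrder ι] {P : V → ι} {T : Finset (ι × ι)}
    (hT : ∀ q ∈ T, q.1 < q.2) : Set.InjOn Sym2.mk.uncurry (crossPairs P T : Set (V × V)) := by
  rintro ⟨u, v⟩ huv ⟨u', v'⟩ huv' h
  simp only [crossPairs, coe_filter, mem_univ, true_and, Set.mem_setOf_eq] at huv huv'
  rcases Sym2.eq_iff.mp h with ⟨rfl, rfl⟩ | ⟨rfl, rfl⟩
  · rfl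
  · exact absurd (hT _ huv) (hT _ huv').not_gt

theorem sq_card_sub_le_two_mul_sum_ite_lt {k : ℕ} (P : V → Fin k) {c : ℝ}
    (hc : ∀ i, (partSize P i : ℝ) ≤ c) :
    (Fintype.card V : ℝ) ^ 2 - c * Fintype.card V
      ≤ 2 * ∑ i, ∑ j, if i < j then (partSize P i : ℝ) * partSize P j else 0 := by
  have hsum : ∑ i, (partSize P i : ℝ) = Fintype.card V := by
    rw [← Nat.cast_sum, ← card_univ]
    simp only [partSize]
    rw [sum_card_fiberwise_eq_card_filter, filter_true_of_mem fun _ _ => mem_univ _]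
  have hsq : ∑ i, (partSize P i : ℝ) ^ 2 ≤ c * Fintype.card V := by
    rw [← hsum, mul_sum]
    exact sum_le_sum fun i _ => by rw [sq]; exact mul_le_mul_of_nonneg_right (hc i) (by positivity)
  have hid : 2 * ∑ i, ∑ j, (if i < j then (partSize P i : ℝ) * partSize P j else 0)
      = (Fintype.card V : ℝ) ^ 2 - ∑ i, (partSize P i : ℝ) ^ 2 := by
    rw [← hsum]
    -- `convert` reconciles the decidability instances of `Fin k` with those of `LinearOrder`
    convert two_mul_sum_ite_lt_mul fun i => (partSize P i : ℝ)
  linarith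

end Partition

theorem exists_heavy_crossPairs_of_not_memGm {V : Type*} [Fintype V] {m : ℕ} (hm : 20 ≤ m)
    {Adj : V → V → Prop} (h : ¬ MemGm m univ Adj) :
    ∃ (P : V → Fin (sBound m)) (T : Finset (Fin (sBound m) × Fin (sBound m))),
      (∀ q ∈ T, q.1 < q.2) ∧ (Fintype.card V : ℝ) ^ 2 / 5 ≤ #(crossPairs P T) ∧
        ∀ uv ∈ crossPairs P T, ¬ Adj uv.1 uv.2 := by
  unfold MemGm at h
  push Not at h
  obtain ⟨P, hsmall, hsparse⟩ := h
  rw [card_univ] at hsmall hsparse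
  let A : Fin (sBound m) → ℝ := fun i => partSize P i
  let Joined : Fin (sBound m) → Fin (sBound m) → Prop :=
    fun i j => ∃ u ∈ univ, ∃ v ∈ univ, P u = i ∧ P v = j ∧ Adj u v
  replace hsmall : ∀ i, A i ≤ Fintype.card V / m := hsmall
  replace hsparse : (∑ i, ∑ j, if i < j ∧ Joined i j then A i * A j else 0)
      ≤ 0.55 * (Fintype.card V * (Fintype.card V - 1) / 2) := hsparse
  let T : Finset (Fin (sBound m) × Fin (sBound m)) := {q | q.1 < q.2 ∧ ¬ Joined q.1 q.2}
  refine ⟨P, T, fun q hq => (mem_filter.mp hq).2.1, ?_, ?_⟩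
  · have hcross := sq_card_sub_le_two_mul_sum_ite_lt P hsmall
    have hsplit : (∑ i, ∑ j, if i < j then A i * A j else 0)
        = ∑ q ∈ T, A q.1 * A q.2 + ∑ i, ∑ j, if i < j ∧ Joined i j then A i * A j else 0 := by
      rw [sum_filter, ← univ_product_univ, sum_product, ← sum_add_distrib]
      refine sum_congr rfl fun i _ => ?_
      rw [← sum_add_distrib]
      refine sum_congr rfl fun j _ => ?_
      by_cases hij : i < j <;> by_cases hJ : Joined i j <;> simp [hij, hJ]
    have hcard : (#(crossPairs P T) : ℝ) = ∑ q ∈ T, A q.1 * A q.2 := by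
      rw [card_crossPairs]
      push_cast
      rfl
    have hm' : (Fintype.card V : ℝ) / m * Fintype.card V ≤ (Fintype.card V : ℝ) ^ 2 / 20 := by
      rw [div_mul_eq_mul_div, ← sq]
      gcongr
      exact_mod_cast hm
    have hN : (0 : ℝ) ≤ Fintype.card V := Nat.cast_nonneg _
    -- `N²/2 - N²/40 - 0.55·N²/2 = N²/5`
    linarith
  · rintro ⟨u, v⟩ huv hadj
    simp only [crossPairs, T, mem_filter, mem_univ, true_and] at huv
    exact huv.2 ⟨u, mem_univ _, v, mem_univ _, rfl, rfl, hadj⟩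

theorem sBound_le (m : ℕ) : (sBound m : ℝ) ≤ 2 ^ ((m : ℝ) / 10 ^ 8) :=
  Nat.floor_le (by positivity)

theorem sBound_sq_le (m : ℕ) : sBound m ^ 2 ≤ 2 ^ m := by
  have h : (sBound m : ℝ) ^ 2 ≤ 2 ^ (m : ℝ) := calc
    (sBound m : ℝ) ^ 2 ≤ (2 ^ ((m : ℝ) / 10 ^ 8)) ^ 2 := by gcongr; exact sBound_le m
    _ = 2 ^ ((m : ℝ) / 10 ^ 8 * 2) := by
      rw [← Real.rpow_natCast, ← Real.rpow_mul (by norm_num), Nat.cast_ofNat]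
    _ ≤ 2 ^ (m : ℝ) :=
      Real.rpow_le_rpow_of_exponent_le (by norm_num) (by linarith [m.cast_nonneg (α := ℝ)])
  rw [Real.rpow_natCast] at h
  exact_mod_cast h

theorem two_rpow_le_exp {x : ℝ} (hx : 0 ≤ x) : (2 : ℝ) ^ x ≤ Real.exp x := by
  rw [Real.rpow_def_of_pos two_pos]
  exact Real.exp_le_exp.mpr
    (mul_le_of_le_one_left hx (Real.log_two_lt_d9.le.trans (by norm_num)))

theorem sBound_pow_mul_two_pow_sq_le {n m d : ℕ} (hmd : m ≤ d) (hd : 12 ≤ d) (hn : 2 ^ m ≤ n) :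
    (sBound m : ℝ) ^ n * 2 ^ (sBound m ^ 2) ≤ Real.exp (d * n / 10) := by
  have hexp : ((m : ℝ) / 10 ^ 8 + 1) * n ≤ d * n / 10 := by
    have hmd' : (m : ℝ) ≤ d := by exact_mod_cast hmd
    have hd' : (12 : ℝ) ≤ d := by exact_mod_cast hd
    nlinarith [n.cast_nonneg (α := ℝ)]
  calc (sBound m : ℝ) ^ n * 2 ^ (sBound m ^ 2)
      ≤ (2 ^ ((m : ℝ) / 10 ^ 8)) ^ n * 2 ^ n := by
        gcongr
        · exact sBound_le m
        · norm_num
        · exact (sBound_sq_le m).trans hn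
    _ = 2 ^ (((m : ℝ) / 10 ^ 8 + 1) * n) := by
        rw [← Real.rpow_natCast, ← Real.rpow_mul zero_le_two, ← Real.rpow_natCast 2 n,
          ← Real.rpow_add two_pos, add_mul, one_mul]
    _ ≤ Real.exp (((m : ℝ) / 10 ^ 8 + 1) * n) := two_rpow_le_exp (by positivity)
    _ ≤ Real.exp (d * n / 10) := Real.exp_le_exp.mpr hexp

def heavyCuts (n k : ℕ) : Finset ((Fin n → Fin k) × Finset (Fin k × Fin k)) :=
  {x | (∀ q ∈ x.2, q.1 < q.2) ∧ (n : ℝ) ^ 2 / 5 ≤ #(crossPairs x.1 x.2)}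

theorem card_heavyCuts_le (n k : ℕ) : #(heavyCuts n k) ≤ k ^ n * 2 ^ (k ^ 2) :=
  (card_le_univ _).trans_eq (by simp [sq])

theorem not_memGm_graphOf_subset {n m : ℕ} (hm : 20 ≤ m) :
    {f | ¬ MemGm m (univ : Finset (Fin n)) (graphOf n f).Adj}
      ⊆ ⋃ x ∈ heavyCuts n (sBound m),
        {f | ∀ e ∈ (crossPairs x.1 x.2).image Sym2.mk.uncurry, f e = false} := by
  intro f hf
  obtain ⟨P, T, hT, hheavy, hnonadj⟩ := exists_heavy_crossPairs_of_not_memGm hm hf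
  rw [Fintype.card_fin] at hheavy
  simp only [heavyCuts, Set.mem_iUnion, mem_filter, mem_univ, true_and, exists_prop]
  refine ⟨(P, T), ⟨hT, hheavy⟩, ?_⟩
  simp only [Set.mem_setOf_eq, mem_image, Prod.exists, forall_exists_index, and_imp]
  rintro _ u v huv rfl
  have hne : u ≠ v := fun h => by
    simp only [crossPairs, mem_filter, mem_univ, true_and, h] at huv
    exact lt_irrefl _ (hT _ huv)
  simpa [graphOf, hne] using hnonadj (u, v) huv

theorem measure_pi_bernoulli_crossPairs_le {n k d : ℕ} (q : ℝ≥0) (hq : q ≤ 1)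
    (hqd : (q : ℝ) = d / n) {x : (Fin n → Fin k) × Finset (Fin k × Fin k)}
    (hx : x ∈ heavyCuts n k) :
    Measure.pi (fun _ : Sym2 (Fin n) => (PMF.bernoulli q hq).toMeasure)
        {f | ∀ e ∈ (crossPairs x.1 x.2).image Sym2.mk.uncurry, f e = false}
      ≤ ENNReal.ofReal (Real.exp (-((d : ℝ) * n) / 5)) := by
  simp only [heavyCuts, mem_filter, mem_univ, true_and] at hx
  refine (measure_pi_bernoulli_forall_false_le _ _ _).trans (ENNReal.ofReal_le_ofReal ?_)
  rw [card_image_of_injOn (injOn_sym2Mk_crossPairs hx.1), hqd]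
  refine Real.exp_le_exp.mpr ?_
  have hdn : (d : ℝ) / n * (n ^ 2 / 5) = d * n / 5 := by
    rcases eq_or_ne (n : ℝ) 0 with h | h
    · simp [h]
    · field_simp
  nlinarith [mul_le_mul_of_nonneg_left hx.2 (by positivity : (0 : ℝ) ≤ d / n)]

/-- For `m ≥ 10⁹`, `m ≤ d ≤ n` and `n ≥ 2^m`, the binomial random graph `G(n, d/n)`
(each pair an edge independently with probability `p = d/n`) fails to lie in `𝒢_m` with
probability at most `e^{−dn/10}`. -/
theorem stmt_9 (n m d : ℕ) (hm : 10 ^ 9 ≤ m) (hmd : m ≤ d) (hn : 2 ^ m ≤ n)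
    (p : ℝ≥0∞) (hp : p ≤ 1) (hpval : p.toReal = (d : ℝ) / n) :
    Measure.pi (fun _ : Sym2 (Fin n) => (PMF.bernoulli p.toNNReal (by simpa using ENNReal.toNNReal_mono ENNReal.one_ne_top hp)).toMeasure)
        {f | ¬ MemGm m (Finset.univ : Finset (Fin n)) (graphOf n f).Adj}
      ≤ ENNReal.ofReal (Real.exp (-((d : ℝ) * n) / 10)) := by
  have hcount : (sBound m : ℝ) ^ n * 2 ^ (sBound m ^ 2) * Real.exp (-((d : ℝ) * n) / 5)
      ≤ Real.exp (-((d : ℝ) * n) / 10) := calc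
    _ ≤ Real.exp (d * n / 10) * Real.exp (-((d : ℝ) * n) / 5) := by
      gcongr
      exact sBound_pow_mul_two_pow_sq_le hmd (by omega) hn
    _ = Real.exp (-((d : ℝ) * n) / 10) := by rw [← Real.exp_add]; ring_nf
  calc _ ≤ ∑ x ∈ heavyCuts n (sBound m), ENNReal.ofReal (Real.exp (-((d : ℝ) * n) / 5)) :=
        (measure_mono (not_memGm_graphOf_subset (by omega))).trans
          ((measure_biUnion_finset_le _ _).trans
            (sum_le_sum fun _ hx => measure_pi_bernoulli_crossPairs_le _ _ hpval hx))
    _ ≤ ((sBound m ^ n * 2 ^ (sBound m ^ 2) : ℕ) : ℝ≥0∞)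
          * ENNReal.ofReal (Real.exp (-((d : ℝ) * n) / 5)) := by
      rw [sum_const, nsmul_eq_mul]
      gcongr
      exact card_heavyCuts_le n (sBound m)
    _ ≤ ENNReal.ofReal (Real.exp (-((d : ℝ) * n) / 10)) := by
      rw [← ENNReal.ofReal_natCast, ← ENNReal.ofReal_mul (Nat.cast_nonneg _)]
      exact ENNReal.ofReal_le_ofReal (by exact_mod_cast hcount)
end
end

section
/- Let n ≥ 10^5 and b be positive integers with b + 1 ≤ n/2000, and let x_1 ≤ x_2 ≤ … ≤ x_n be nonnegative integers in which no value occurs more than b times. Define a process as follows: set ℓ_1 = 1, r_1 = n; at step j, if r_j − ℓ_j < n/2000, stop and set T = j; otherwise, since x_{ℓ_j} < x_{r_j}, there is a unique index p_j ∈ {ℓ_j, …, r_j − 1} maximizing δ(x_i, x_{i+1}) over i ∈ {ℓ_j, …, r_j − 1}; if p_j − ℓ_j ≥ r_j − p_j, call j a left step and set (ℓ_{j+1}, r_{j+1}) = (ℓ_j, p_j), and otherwise call j a right step and set (ℓ_{j+1}, r_{j+1}) = (p_j + 1, r_j). Then at least one of the following holds: (C1) there exist indices 1 < t_1 < t_2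 < t_3 ≤ T such that t_1 − 1, t_2 − 1 and t_3 − 1 are right steps and ℓ_{t_1} − ℓ_1 ≥ n/1024, ℓ_{t_2} − ℓ_{t_1} ≥ n/1024, and ℓ_{t_3} − ℓ_{t_2} ≥ n/1024; or (C2) there exist indices 1 < t_1 < t_2 < t_3 ≤ T such that t_1 − 1, t_2 − 1 and t_3 − 1 are left steps and r_1 − r_{t_1} ≥ n/1024, r_{t_1} − r_{t_2} ≥ n/1024, and r_{t_2} − r_{t_3} ≥ n/1024. -/
attribute [local instance] Classical.propDecidable

noncomputable section

/-- `bitfn x i` is the coefficient `a_{i-1}` in the binary representation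
`x = Σ_{i≥0} a_i 2^i`. -/
def bitfn (x i : ℕ) : ℕ := x / 2 ^ (i - 1) % 2

/-- `deltafn x y = max { i ≥ 1 | bit(x,i) ≠ bit(y,i) }`, with `deltafn x x = 0`. -/
def deltafn (x y : ℕ) : ℕ := sSup {i : ℕ | 1 ≤ i ∧ bitfn x i ≠ bitfn y i}

/-- Step `j` of the interval-halving process is a left step iff
`p_j − ℓ_j ≥ r_j − p_j`. -/
def LeftStep (l r p : ℕ → ℕ) (j : ℕ) : Prop := r j - p j ≤ p j - l j

/-! Write `u j = r j - l j + 1`; a step never shrinks `u` by more than half of its current value.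
If (C1) fails, cut the motion of `l` at the first times it has advanced by `c = n/1024` since the
previous cut: only right steps move `l`, and each cut overshoots `c` by at most one step, so
`l T - l 1 < 3c` plus the advances of at most two right steps. Symmetrically, if (C2) fails,
`r 1 - r T < 3c` plus the retreats of at most two left steps. Along at most four distinct steps
`u` loses at most `(1 - 2⁻⁴) n`, so `n - 1 - (r T - l T) < 6c + 15n/16`, which contradicts
`r T - l T < n/2000` once `n ≥ 10⁵`. -/

open Finset

theorem sum_sub_succ_le_of_le_two_mul (u : ℕ → ℝ) (S : Finset ℕ) (M : ℝ)
    (hhalf : ∀ j ∈ S, u j ≤ 2 * u (j + 1))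
    (hanti : ∀ i ∈ S, ∀ j ∈ S, i < j → u j ≤ u (i + 1))
    (hM : ∀ j ∈ S, u j ≤ M) :
    ∑ j ∈ S, (u j - u (j + 1)) ≤ (1 - (1 / 2) ^ #S) * M := by
  induction S using Finset.induction_on_min generalizing M with
  | empty => simp
  | insert m S hmS ih =>
    have hm : m ∉ S := fun h => lt_irrefl m (hmS m h)
    set d := u m - u (m + 1)
    have hd : d ≤ M / 2 := by
      linarith [hhalf m (mem_insert_self m S), hM m (mem_insert_self m S)]
    have hrest : ∑ j ∈ S, (u j - u (j + 1)) ≤ (1 - (1 / 2) ^ #S) * (M - d) := by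
      refine ih (M - d) (fun j hj => hhalf j (mem_insert_of_mem hj))
        (fun i hi j hj => hanti i (mem_insert_of_mem hi) j (mem_insert_of_mem hj)) fun j hj => ?_
      linarith [hanti m (mem_insert_self m S) j (mem_insert_of_mem hj) (hmS j hj),
        hM m (mem_insert_self m S)]
    have hpow : (0 : ℝ) ≤ (1 / 2) ^ #S := by positivity
    rw [sum_insert hm, card_insert_of_notMem hm, pow_succ]
    nlinarith

section Gains

variable {f D : ℕ → ℝ} {P : ℕ → Prop} {T : ℕ} {c : ℝ}

theorem exists_first_gain (hfix : ∀ j, 1 ≤ j → j < T → ¬ P j → f (j + 1) = f j)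
    (hjump : ∀ j, 1 ≤ j → j < T → f (j + 1) - f j ≤ D j) (hc : 0 < c) {s : ℕ}
    (hs : 1 ≤ s) (hsT : s ≤ T) (hgain : c ≤ f T - f s) :
    ∃ t, s < t ∧ t ≤ T ∧ P (t - 1) ∧ c ≤ f t - f s ∧ f t - f s < c + D (t - 1) := by
  have hex : ∃ t, s ≤ t ∧ t ≤ T ∧ c ≤ f t - f s := ⟨T, hsT, le_rfl, hgain⟩
  obtain ⟨hst, htT, hct⟩ := Nat.find_spec hex
  set t := Nat.find hex
  have hst' : s < t := hst.lt_of_ne fun h => by rw [← h, sub_self] at hct; linarith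
  have hprev : f (t - 1) - f s < c :=
    lt_of_not_ge fun h => Nat.find_min hex (show t - 1 < t by omega) ⟨by omega, by omega, h⟩
  have hsucc : t - 1 + 1 = t := by omega
  refine ⟨t, hst', htT, ?_, hct, ?_⟩
  · by_contra hP
    have := hfix (t - 1) (by omega) (by omega) hP
    rw [hsucc] at this
    linarith
  · have := hjump (t - 1) (by omega) (by omega)
    rw [hsucc] at this
    linarith

theorem three_gains_or_sum_le (hfix : ∀ j, 1 ≤ j → j < T → ¬ P j → f (j + 1) = f j)
    (hjump : ∀ j, 1 ≤ j → j < T → f (j + 1) - f j ≤ D j) (hc : 0 < c) (hT : 1 ≤ T) :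
    (∃ t₁ t₂ t₃ : ℕ, 1 < t₁ ∧ t₁ < t₂ ∧ t₂ < t₃ ∧ t₃ ≤ T ∧
      P (t₁ - 1) ∧ P (t₂ - 1) ∧ P (t₃ - 1) ∧
      c ≤ f t₁ - f 1 ∧ c ≤ f t₂ - f t₁ ∧ c ≤ f t₃ - f t₂) ∨
    ∃ S : Finset ℕ, #S ≤ 2 ∧ (∀ j ∈ S, (1 ≤ j ∧ j < T) ∧ P j) ∧
      f T - f 1 < 3 * c + ∑ j ∈ S, D j := by
  rcases lt_or_ge (f T - f 1) c with h₀ | h₀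
  · exact Or.inr ⟨∅, by simp, by simp, by simp; linarith⟩
  obtain ⟨t₁, ht₁, ht₁T, hP₁, hc₁, hd₁⟩ := exists_first_gain hfix hjump hc le_rfl hT h₀
  rcases lt_or_ge (f T - f t₁) c with h₁ | h₁
  · refine Or.inr ⟨{t₁ - 1}, by simp, ?_, ?_⟩
    · simp only [mem_singleton, forall_eq]
      exact ⟨⟨by omega, by omega⟩, hP₁⟩
    · rw [sum_singleton]; linarith
  obtain ⟨t₂, ht₂, ht₂T, hP₂, hc₂, hd₂⟩ :=
    exists_first_gain hfix hjump hc (by omega) ht₁T h₁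
  rcases lt_or_ge (f T - f t₂) c with h₂ | h₂
  · refine Or.inr ⟨{t₁ - 1, t₂ - 1}, card_le_two, ?_, ?_⟩
    · simp only [mem_insert, mem_singleton, forall_eq_or_imp, forall_eq]
      exact ⟨⟨⟨by omega, by omega⟩, hP₁⟩, ⟨by omega, by omega⟩, hP₂⟩
    · rw [sum_pair (by omega)]; linarith
  obtain ⟨t₃, ht₃, ht₃T, hP₃, hc₃, -⟩ := exists_first_gain hfix hjump hc (by omega) ht₂T h₂
  exact Or.inl ⟨t₁, t₂, t₃, ht₁, ht₂, ht₃, ht₃T, hP₁, hP₂, hP₃, hc₁, hc₂, hc₃⟩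

end Gains

def HalvingStep (l r p : ℕ → ℕ) (j : ℕ) : Prop :=
  (l j ≤ p j ∧ p j < r j) ∧
    (if LeftStep l r p j then l (j + 1) = l j ∧ r (j + 1) = p j
     else l (j + 1) = p j + 1 ∧ r (j + 1) = r j)

namespace HalvingStep

variable {l r p : ℕ → ℕ} {j : ℕ}

theorem l_succ_eq_of_leftStep (h : HalvingStep l r p j) (hL : LeftStep l r p j) :
    l (j + 1) = l j := by
  have := h.2; rw [if_pos hL] at this; exact this.1

theorem r_succ_eq_of_not_leftStep (h : HalvingStep l r p j) (hR : ¬ LeftStep l r p j) :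
    r (j + 1) = r j := by
  have := h.2; rw [if_neg hR] at this; exact this.2

theorem l_le_succ (h : HalvingStep l r p j) : l j ≤ l (j + 1) := by
  obtain ⟨⟨hlp, -⟩, hs⟩ := h; split_ifs at hs <;> omega

theorem r_succ_le (h : HalvingStep l r p j) : r (j + 1) ≤ r j := by
  obtain ⟨⟨-, hpr⟩, hs⟩ := h; split_ifs at hs <;> omega

theorem length_le_two_mul (h : HalvingStep l r p j) :
    (r j - l j + 1 : ℝ) ≤ 2 * (r (j + 1) - l (j + 1) + 1) := by
  obtain ⟨⟨hlp, hpr⟩, hs⟩ := h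
  have : r j + 1 + 2 * l (j + 1) ≤ 2 * (r (j + 1) + 1) + l j := by
    unfold LeftStep at hs; split_ifs at hs <;> omega
  have := (Nat.cast_le (α := ℝ)).2 this
  push_cast at this
  linarith

end HalvingStep

theorem antitoneOn_length {l r p : ℕ → ℕ} {T : ℕ}
    (h : ∀ j, 1 ≤ j → j < T → HalvingStep l r p j) :
    AntitoneOn (fun j => (r j - l j + 1 : ℝ)) (Set.Icc 1 T) := by
  refine antitoneOn_of_succ_le Set.ordConnected_Icc fun j _ hj hj' => ?_
  rw [Order.succ_eq_add_one] at hj' ⊢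
  have hs := h j hj.1 (Nat.lt_of_succ_le hj'.2)
  have h₁ : (l j : ℝ) ≤ l (j + 1) := by exact_mod_cast hs.l_le_succ
  have h₂ : (r (j + 1) : ℝ) ≤ r j := by exact_mod_cast hs.r_succ_le
  linarith

theorem stmt_14_general (n : ℕ) (hn : 10 ^ 5 ≤ n) (x : ℕ → ℕ)
    (T : ℕ) (hT : 1 ≤ T) (l r p : ℕ → ℕ) (hl1 : l 1 = 1) (hr1 : r 1 = n)
    (hrun : ∀ j, 1 ≤ j → j < T →
      ((n : ℝ) / 2000 ≤ (r j : ℝ) - (l j : ℝ)) ∧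
      (l j ≤ p j ∧ p j < r j) ∧
      (∀ i, l j ≤ i → i < r j → deltafn (x i) (x (i + 1)) ≤ deltafn (x (p j)) (x (p j + 1))) ∧
      (if LeftStep l r p j then l (j + 1) = l j ∧ r (j + 1) = p j
       else l (j + 1) = p j + 1 ∧ r (j + 1) = r j))
    (hstop : (r T : ℝ) - (l T : ℝ) < (n : ℝ) / 2000) :
    (∃ t₁ t₂ t₃ : ℕ, 1 < t₁ ∧ t₁ < t₂ ∧ t₂ < t₃ ∧ t₃ ≤ T ∧
      (¬ LeftStep l r p (t₁ - 1)) ∧ (¬ LeftStep l r p (t₂ - 1)) ∧ (¬ LeftStep l r p (t₃ - 1)) ∧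
      (n : ℝ) / 1024 ≤ (l t₁ : ℝ) - (l 1 : ℝ) ∧
      (n : ℝ) / 1024 ≤ (l t₂ : ℝ) - (l t₁ : ℝ) ∧
      (n : ℝ) / 1024 ≤ (l t₃ : ℝ) - (l t₂ : ℝ)) ∨
    (∃ t₁ t₂ t₃ : ℕ, 1 < t₁ ∧ t₁ < t₂ ∧ t₂ < t₃ ∧ t₃ ≤ T ∧
      LeftStep l r p (t₁ - 1) ∧ LeftStep l r p (t₂ - 1) ∧ LeftStep l r p (t₃ - 1) ∧
      (n : ℝ) / 1024 ≤ (r 1 : ℝ) - (r t₁ : ℝ) ∧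
      (n : ℝ) / 1024 ≤ (r t₁ : ℝ) - (r t₂ : ℝ) ∧
      (n : ℝ) / 1024 ≤ (r t₂ : ℝ) - (r t₃ : ℝ)) := by
  have hstep (j : ℕ) (hj : 1 ≤ j) (hjT : j < T) : HalvingStep l r p j :=
    ⟨(hrun j hj hjT).2.1, (hrun j hj hjT).2.2.2⟩
  have hn' : (10 ^ 5 : ℝ) ≤ n := by exact_mod_cast hn
  have hc : (0 : ℝ) < n / 1024 := by positivity
  let u (j : ℕ) : ℝ := r j - l j + 1
  obtain hC₁ | ⟨S₁, hS₁, hS₁T, hl⟩ := three_gains_or_sum_le (f := fun t => (l t : ℝ))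
    (D := fun j => u j - u (j + 1)) (P := fun j => ¬ LeftStep l r p j)
    (fun j hj hjT hL => by rw [not_not] at hL; simp [(hstep j hj hjT).l_succ_eq_of_leftStep hL])
    (fun j hj hjT => by
      have : (r (j + 1) : ℝ) ≤ r j := by exact_mod_cast (hstep j hj hjT).r_succ_le
      simp only [u]; linarith) hc hT
  · exact Or.inl hC₁
  obtain ⟨t₁, t₂, t₃, h₁, h₂, h₃, h₄, h₅, h₆, h₇, h₈, h₉, h₁₀⟩ | ⟨S₂, hS₂, hS₂T, hr⟩ :=
    three_gains_or_sum_le (f := fun t => -(r t : ℝ)) (D := fun j => u j - u (j + 1))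
    (P := LeftStep l r p)
    (fun j hj hjT hR => by simp [(hstep j hj hjT).r_succ_eq_of_not_leftStep hR])
    (fun j hj hjT => by
      have : (l j : ℝ) ≤ l (j + 1) := by exact_mod_cast (hstep j hj hjT).l_le_succ
      simp only [u]; linarith) hc hT
  · exact Or.inr ⟨t₁, t₂, t₃, h₁, h₂, h₃, h₄, h₅, h₆, h₇, by linarith, by linarith, by linarith⟩
  have hS (j : ℕ) (hj : j ∈ S₁ ∪ S₂) : 1 ≤ j ∧ j < T := by
    rcases mem_union.1 hj with hj | hj
    exacts [(hS₁T j hj).1, (hS₂T j hj).1]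
  have hanti := antitoneOn_length hstep
  have hsum := sum_sub_succ_le_of_le_two_mul u (S₁ ∪ S₂) (u 1)
    (fun j hj => (hstep j (hS j hj).1 (hS j hj).2).length_le_two_mul)
    (fun i hi j hj hij => hanti ⟨by omega, (hS i hi).2⟩ ⟨(hS j hj).1, (hS j hj).2.le⟩ hij)
    (fun j hj => hanti ⟨le_rfl, hT⟩ ⟨(hS j hj).1, (hS j hj).2.le⟩ (hS j hj).1)
  rw [sum_union (disjoint_left.2 fun j h₁ h₂ => (hS₁T j h₁).2 (hS₂T j h₂).2)] at hsum
  have hpow : (1 / 2 : ℝ) ^ 4 ≤ (1 / 2) ^ #(S₁ ∪ S₂) :=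
    pow_le_pow_of_le_one (by norm_num) (by norm_num) ((card_union_le _ _).trans (by omega))
  have hshrink : (1 - (1 / 2) ^ #(S₁ ∪ S₂)) * (n : ℝ) ≤ 15 / 16 * n := by nlinarith
  simp only [u, hl1, hr1, Nat.cast_one] at hl hr hsum
  -- `n - 1 - (r T - l T) < 6n/1024 + 15n/16`, while `r T - l T < n/2000`.
  linarith

/-- Let `n ≥ 10⁵` and `b` be positive integers with `b + 1 ≤ n/2000`, and let
`x_1 ≤ … ≤ x_n` be nonnegative integers, no value occurring more than `b` times.  Run the
process: `(ℓ_1, r_1) = (1, n)`; at step `j`, stop (setting `T = j`) if `r_j − ℓ_j < n/2000`;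
otherwise let `p_j ∈ {ℓ_j,…,r_j−1}` be the (unique) maximizer of `δ(x_i, x_{i+1})`, and set
`(ℓ_{j+1}, r_{j+1}) = (ℓ_j, p_j)` if `p_j − ℓ_j ≥ r_j − p_j` (a left step) and
`(ℓ_{j+1}, r_{j+1}) = (p_j + 1, r_j)` otherwise (a right step).  Then either (C1) there are
`1 < t₁ < t₂ < t₃ ≤ T` such that `t₁−1, t₂−1, t₃−1` are right steps and
`ℓ_{t₁} − ℓ_1, ℓ_{t₂} − ℓ_{t₁}, ℓ_{t₃} − ℓ_{t₂} ≥ n/1024`, or (C2) there are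
`1 < t₁ < t₂ < t₃ ≤ T` such that `t₁−1, t₂−1, t₃−1` are left steps and
`r_1 − r_{t₁}, r_{t₁} − r_{t₂}, r_{t₂} − r_{t₃} ≥ n/1024`. -/
theorem stmt_14 (n b : ℕ) (hn : 10 ^ 5 ≤ n) (hb : 0 < b)
    (hbn : (b : ℝ) + 1 ≤ (n : ℝ) / 2000)
    (x : ℕ → ℕ) (hmono : ∀ i, 1 ≤ i → i < n → x i ≤ x (i + 1))
    (hmult : ∀ v : ℕ, ((Finset.Icc 1 n).filter fun i => x i = v).card ≤ b)
    (T : ℕ) (hT : 1 ≤ T) (l r p : ℕ → ℕ) (hl1 : l 1 = 1) (hr1 : r 1 = n)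
    (hrun : ∀ j, 1 ≤ j → j < T →
      ((n : ℝ) / 2000 ≤ (r j : ℝ) - (l j : ℝ)) ∧
      (l j ≤ p j ∧ p j < r j) ∧
      (∀ i, l j ≤ i → i < r j → deltafn (x i) (x (i + 1)) ≤ deltafn (x (p j)) (x (p j + 1))) ∧
      (if LeftStep l r p j then l (j + 1) = l j ∧ r (j + 1) = p j
       else l (j + 1) = p j + 1 ∧ r (j + 1) = r j))
    (hstop : (r T : ℝ) - (l T : ℝ) < (n : ℝ) / 2000) :
    (∃ t₁ t₂ t₃ : ℕ, 1 < t₁ ∧ t₁ < t₂ ∧ t₂ < t₃ ∧ t₃ ≤ T ∧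
      (¬ LeftStep l r p (t₁ - 1)) ∧ (¬ LeftStep l r p (t₂ - 1)) ∧ (¬ LeftStep l r p (t₃ - 1)) ∧
      (n : ℝ) / 1024 ≤ (l t₁ : ℝ) - (l 1 : ℝ) ∧
      (n : ℝ) / 1024 ≤ (l t₂ : ℝ) - (l t₁ : ℝ) ∧
      (n : ℝ) / 1024 ≤ (l t₃ : ℝ) - (l t₂ : ℝ)) ∨
    (∃ t₁ t₂ t₃ : ℕ, 1 < t₁ ∧ t₁ < t₂ ∧ t₂ < t₃ ∧ t₃ ≤ T ∧
      LeftStep l r p (t₁ - 1) ∧ LeftStep l r p (t₂ - 1) ∧ LeftStep l r p (t₃ - 1) ∧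
      (n : ℝ) / 1024 ≤ (r 1 : ℝ) - (r t₁ : ℝ) ∧
      (n : ℝ) / 1024 ≤ (r t₁ : ℝ) - (r t₂ : ℝ) ∧
      (n : ℝ) / 1024 ≤ (r t₂ : ℝ) - (r t₃ : ℝ)) :=
  stmt_14_general n hn x T hT l r p hl1 hr1 hrun hstop
end
end
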